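/- Let A : Matrix (Fin m) (Fin n) ℤ with a bouquet decomposition c_1, …, c_s, bouquet matrix A_B, and map B(u) = Σ_i u_i • c_i. Assume ker_ℤ(A) contains no nonzero componentwise-nonnegative vector, assume each c_i either is componentwise nonnegative or has both a positive and a negative coordinate, and let S := {i ∈ Fin s | c_i has both a positive and a negative coordinate}. Then the following are equivalent: (a) no element u of the Graver basis Gr(A_B) admits a proper semiconformal decomposition u = v + w in ker_ℤ(A_B) with v_i · w_i ≥ 0 for every i ∈ S; (b) no element of the Graver basis Gr(A) admits a proper semiconformal decomposition in ker_ℤ(A). -/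
import Mathlib


/-- The integer kernel of an integer matrix. -/
def kerZ {m n : ℕ} (A : Matrix (Fin m) (Fin n) ℤ) : Set (Fin n → ℤ) :=
  {u | A.mulVec u = 0}

/-- The componentwise positive part `u⁺` of an integer vector. -/
def posPartZ {n : ℕ} (u : Fin n → ℤ) : Fin n → ℤ := fun i => max (u i) 0

/-- The componentwise negative part `u⁻` of an integer vector. -/
def negPartZ {n : ℕ} (u : Fin n → ℤ) : Fin n → ℤ := fun i => max (-u i) 0

/-- `u = v + w` is a proper conformal decomposition within `kerZ A`. -/
def IsProperConformalDecomp {m n : ℕ} (A : Matrix (Fin m) (Fin n) ℤ)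
    (u v w : Fin n → ℤ) : Prop :=
  v ∈ kerZ A ∧ w ∈ kerZ A ∧ v ≠ 0 ∧ w ≠ 0 ∧ u = v + w ∧
    posPartZ u = posPartZ v + posPartZ w ∧ negPartZ u = negPartZ v + negPartZ w

/-- `u` belongs to the Graver basis of `A`: it is a nonzero element of the integer
kernel admitting no proper conformal decomposition. -/
def InGraver {m n : ℕ} (A : Matrix (Fin m) (Fin n) ℤ) (u : Fin n → ℤ) : Prop :=
  u ∈ kerZ A ∧ u ≠ 0 ∧ ¬ ∃ v w, IsProperConformalDecomp A u v w

/-- `u = v + w` is a proper semiconformal decomposition within `kerZ A`. -/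
def IsProperSemiconformalDecomp {m n : ℕ} (A : Matrix (Fin m) (Fin n) ℤ)
    (u v w : Fin n → ℤ) : Prop :=
  v ∈ kerZ A ∧ w ∈ kerZ A ∧ v ≠ 0 ∧ w ≠ 0 ∧ u = v + w ∧
    ∀ i, (0 < v i → 0 ≤ w i) ∧ (w i < 0 → v i ≤ 0)

/-- `c 0, …, c (s-1)` is a bouquet decomposition of `A`: the supports are nonempty,
pairwise disjoint and cover `Fin n`, and every integer kernel element of `A` is,
on the support of each `c i`, an integer multiple of `c i`. -/
def IsBouquetDecomposition {m n s : ℕ} (A : Matrix (Fin m) (Fin n) ℤ)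
    (c : Fin s → Fin n → ℤ) : Prop :=
  (∀ i, (Function.support (c i)).Nonempty) ∧
  (∀ i i', i ≠ i' → Disjoint (Function.support (c i)) (Function.support (c i'))) ∧
  (∀ j, ∃ i, c i j ≠ 0) ∧
  (∀ v ∈ kerZ A, ∀ i, ∃ t : ℤ, ∀ j ∈ Function.support (c i), v j = t * c i j)

/-- The bouquet matrix `A_B`, whose `i`-th column is `A.mulVec (c i)`. -/
def bouquetMatrix {m n s : ℕ} (A : Matrix (Fin m) (Fin n) ℤ)
    (c : Fin s → Fin n → ℤ) : Matrix (Fin m) (Fin s) ℤ :=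
  Matrix.of fun k i => A.mulVec (c i) k

/-- The map `B(u) = Σ_i u_i • c_i`. -/
def Bmap {n s : ℕ} (c : Fin s → Fin n → ℤ) (u : Fin s → ℤ) : Fin n → ℤ :=
  ∑ i, u i • c i

section Aux

variable {m n s : ℕ} (A : Matrix (Fin m) (Fin n) ℤ) (c : Fin s → Fin n → ℤ)

lemma Bmap_apply'
    (hdisj : ∀ i i', i ≠ i' → Disjoint (Function.support (c i)) (Function.support (c i')))
    (u : Fin s → ℤ) {i : Fin s} {j : Fin n} (hij : c i j ≠ 0) :
    Bmap c u j = u i * c i j := by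
  have h : ∀ i' ∈ Finset.univ, i' ≠ i → u i' * c i' j = 0 := by
    intro i' _ hne
    have hz : c i' j = 0 := by
      by_contra h
      exact Set.disjoint_left.mp (hdisj i' i hne) h hij
    simp [hz]
  calc Bmap c u j = ∑ i', u i' * c i' j := by simp [Bmap]
    _ = u i * c i j := Finset.sum_eq_single i h (by simp)

lemma mulVec_Bmap (u : Fin s → ℤ) :
    A.mulVec (Bmap c u) = (bouquetMatrix A c).mulVec u := by
  funext k
  simp only [Matrix.mulVec, dotProduct, Bmap, Finset.sum_apply, Pi.smul_apply,
    smul_eq_mul, bouquetMatrix, Matrix.of_apply, Finset.mul_sum]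
  rw [Finset.sum_comm]
  refine Finset.sum_congr rfl fun i _ => ?_
  rw [Finset.sum_mul]
  exact Finset.sum_congr rfl fun j _ => by ring

lemma mem_ker_iff (u : Fin s → ℤ) :
    u ∈ kerZ (bouquetMatrix A c) ↔ Bmap c u ∈ kerZ A := by
  unfold kerZ
  rw [Set.mem_setOf_eq, Set.mem_setOf_eq, mulVec_Bmap A c u]

lemma Bmap_add (v w : Fin s → ℤ) : Bmap c (v + w) = Bmap c v + Bmap c w := by
  unfold Bmap
  simp [add_smul, Finset.sum_add_distrib]

lemma Bmap_zero : Bmap c (0 : Fin s → ℤ) = 0 := by simp [Bmap]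

lemma Bmap_eq_zero (hne : ∀ i, (Function.support (c i)).Nonempty)
    (hdisj : ∀ i i', i ≠ i' → Disjoint (Function.support (c i)) (Function.support (c i')))
    {u : Fin s → ℤ} (h : Bmap c u = 0) : u = 0 := by
  funext i
  obtain ⟨j, hj⟩ := hne i
  have hj' : c i j ≠ 0 := hj
  have h2 := Bmap_apply' c hdisj u hj'
  rw [h] at h2
  have h3 : u i * c i j = 0 := h2.symm
  rcases mul_eq_zero.mp h3 with h4 | h4
  · exact h4
  · exact absurd h4 hj'

lemma Bmap_inj (hne : ∀ i, (Function.support (c i)).Nonempty)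
    (hdisj : ∀ i i', i ≠ i' → Disjoint (Function.support (c i)) (Function.support (c i')))
    {u v : Fin s → ℤ} (h : Bmap c u = Bmap c v) : u = v := by
  have hsub : Bmap c (u - v) = 0 := by
    have hx : Bmap c (u - v) = Bmap c u - Bmap c v := by
      unfold Bmap
      simp [sub_smul, Finset.sum_sub_distrib]
    rw [hx, h, sub_self]
  have h0 := Bmap_eq_zero c hne hdisj hsub
  funext i
  have := congrFun h0 i
  simp at this
  omega

lemma exists_Bmap
    (hdisj : ∀ i i', i ≠ i' → Disjoint (Function.support (c i)) (Function.support (c i')))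
    (hcov : ∀ j, ∃ i, c i j ≠ 0)
    (hmult : ∀ v ∈ kerZ A, ∀ i, ∃ t : ℤ, ∀ j ∈ Function.support (c i), v j = t * c i j)
    {v : Fin n → ℤ} (hv : v ∈ kerZ A) : ∃ u, Bmap c u = v := by
  choose t ht using hmult v hv
  refine ⟨t, funext fun j => ?_⟩
  obtain ⟨i, hij⟩ := hcov j
  rw [Bmap_apply' c hdisj t hij]
  exact (ht i j hij).symm

end Aux

lemma sgn_mul_right {a d : ℤ} (hd : 0 < d) :
    (0 < a * d ↔ 0 < a) ∧ (a * d < 0 ↔ a < 0) := by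
  constructor
  · rw [mul_pos_iff]; omega
  · rw [mul_neg_iff]; omega

lemma pos_neg_part_eq {k : ℕ} {v w : Fin k → ℤ}
    (h : ∀ i, 0 ≤ v i * w i) :
    posPartZ (v + w) = posPartZ v + posPartZ w ∧
      negPartZ (v + w) = negPartZ v + negPartZ w := by
  constructor <;> funext i <;>
  · have := mul_nonneg_iff.mp (h i)
    simp only [posPartZ, negPartZ, Pi.add_apply]
    omega

lemma prod_nonneg_of_posPart {k : ℕ} {v w : Fin k → ℤ}
    (h : posPartZ (v + w) = posPartZ v + posPartZ w) (i : Fin k) : 0 ≤ v i * w i := by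
  have := congrFun h i
  simp only [posPartZ, Pi.add_apply] at this
  rw [mul_nonneg_iff]
  omega

lemma semiconf_pair_of_prod {a b : ℤ} (h : 0 ≤ a * b) :
    (0 < a → 0 ≤ b) ∧ (b < 0 → a ≤ 0) := by
  have := mul_nonneg_iff.mp h
  omega

section Transfer

variable {m n s : ℕ} (A : Matrix (Fin m) (Fin n) ℤ) (c : Fin s → Fin n → ℤ)

lemma prod_transfer (hne : ∀ i, (Function.support (c i)).Nonempty)
    (hdisj : ∀ i i', i ≠ i' → Disjoint (Function.support (c i)) (Function.support (c i')))
    (hcov : ∀ j, ∃ i, c i j ≠ 0) (v w : Fin s → ℤ) :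
    (∀ i, 0 ≤ v i * w i) ↔ ∀ j, 0 ≤ Bmap c v j * Bmap c w j := by
  constructor
  · intro h j
    obtain ⟨i, hij⟩ := hcov j
    rw [Bmap_apply' c hdisj v hij, Bmap_apply' c hdisj w hij,
      show v i * c i j * (w i * c i j) = v i * w i * (c i j * c i j) from by ring]
    exact mul_nonneg (h i) (mul_self_nonneg _)
  · intro h i
    obtain ⟨j, hj⟩ := hne i
    have hj' : c i j ≠ 0 := hj
    have h2 := h j
    rw [Bmap_apply' c hdisj v hj', Bmap_apply' c hdisj w hj',
      show v i * c i j * (w i * c i j) = v i * w i * (c i j * c i j) from by ring] at h2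
    have hc2 : 0 < c i j * c i j := mul_self_pos.mpr hj'
    exact le_of_mul_le_mul_right (by rw [zero_mul]; exact h2) hc2

lemma graver_transfer (hc : IsBouquetDecomposition A c) (u : Fin s → ℤ) :
    InGraver (bouquetMatrix A c) u ↔ InGraver A (Bmap c u) := by
  obtain ⟨hne, hdisj, hcov, hmult⟩ := hc
  constructor
  · rintro ⟨hker, hu0, hnd⟩
    refine ⟨(mem_ker_iff A c u).mp hker, fun h0 => hu0 (Bmap_eq_zero c hne hdisj h0), ?_⟩
    rintro ⟨x, y, hxk, hyk, hx0, hy0, hsum, hpp, hnp⟩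
    obtain ⟨v, rfl⟩ := exists_Bmap A c hdisj hcov hmult hxk
    obtain ⟨w, rfl⟩ := exists_Bmap A c hdisj hcov hmult hyk
    have huvw : u = v + w := Bmap_inj c hne hdisj (by rw [Bmap_add]; exact hsum)
    have hpp' : posPartZ (Bmap c v + Bmap c w) = posPartZ (Bmap c v) + posPartZ (Bmap c w) := by
      rw [← hsum]; exact hpp
    have hprod : ∀ i, 0 ≤ v i * w i :=
      (prod_transfer c hne hdisj hcov v w).mpr (prod_nonneg_of_posPart hpp')
    exact hnd ⟨v, w, (mem_ker_iff A c v).mpr hxk, (mem_ker_iff A c w).mpr hyk,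
      fun h => hx0 (by rw [h, Bmap_zero]), fun h => hy0 (by rw [h, Bmap_zero]), huvw,
      by rw [huvw]; exact (pos_neg_part_eq hprod).1,
      by rw [huvw]; exact (pos_neg_part_eq hprod).2⟩
  · rintro ⟨hker, hu0, hnd⟩
    refine ⟨(mem_ker_iff A c u).mpr hker, ?_, ?_⟩
    · rintro rfl; exact hu0 (Bmap_zero c)
    · rintro ⟨v, w, hvk, hwk, hv0, hw0, hsum, hpp, hnp⟩
      have hpp' : posPartZ (v + w) = posPartZ v + posPartZ w := by rw [← hsum]; exact hpp
      have hprod := prod_nonneg_of_posPart hpp'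
      have hprodn := (prod_transfer c hne hdisj hcov v w).mp hprod
      have hBsum : Bmap c u = Bmap c v + Bmap c w := by rw [hsum, Bmap_add]
      exact hnd ⟨Bmap c v, Bmap c w, (mem_ker_iff A c v).mp hvk, (mem_ker_iff A c w).mp hwk,
        fun h => hv0 (Bmap_eq_zero c hne hdisj h), fun h => hw0 (Bmap_eq_zero c hne hdisj h),
        hBsum, by rw [hBsum]; exact (pos_neg_part_eq hprodn).1,
        by rw [hBsum]; exact (pos_neg_part_eq hprodn).2⟩

lemma semiconf_transfer (hc : IsBouquetDecomposition A c)
    (hsign : ∀ i, (∀ j, 0 ≤ c i j) ∨ ((∃ j, 0 < c i j) ∧ (∃ j, c i j < 0)))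
    (u v w : Fin s → ℤ) :
    (IsProperSemiconformalDecomp (bouquetMatrix A c) u v w ∧
      ∀ i, ((∃ j, 0 < c i j) ∧ (∃ j, c i j < 0)) → 0 ≤ v i * w i) ↔
    IsProperSemiconformalDecomp A (Bmap c u) (Bmap c v) (Bmap c w) := by
  obtain ⟨hne, hdisj, hcov, hmult⟩ := hc
  constructor
  · rintro ⟨⟨hvk, hwk, hv0, hw0, hsum, hsc⟩, hScond⟩
    refine ⟨(mem_ker_iff A c v).mp hvk, (mem_ker_iff A c w).mp hwk,
      fun h => hv0 (Bmap_eq_zero c hne hdisj h),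
      fun h => hw0 (Bmap_eq_zero c hne hdisj h),
      by rw [hsum, Bmap_add], ?_⟩
    intro j
    obtain ⟨i, hij⟩ := hcov j
    rw [Bmap_apply' c hdisj v hij, Bmap_apply' c hdisj w hij]
    rcases hsign i with hnn | hmix
    · have hd : 0 < c i j := lt_of_le_of_ne (hnn j) (Ne.symm hij)
      constructor
      · intro hp
        have hv' : 0 < v i := (sgn_mul_right hd).1.mp hp
        exact mul_nonneg ((hsc i).1 hv') hd.le
      · intro hn
        have hw' : w i < 0 := (sgn_mul_right hd).2.mp hn
        exact mul_nonpos_iff.mpr (Or.inr ⟨(hsc i).2 hw', hd.le⟩)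
    · refine semiconf_pair_of_prod ?_
      rw [show v i * c i j * (w i * c i j) = v i * w i * (c i j * c i j) from by ring]
      exact mul_nonneg (hScond i hmix) (mul_self_nonneg _)
  · rintro ⟨hvk, hwk, hv0, hw0, hsum, hsc⟩
    have hsum' : u = v + w := Bmap_inj c hne hdisj (by rw [Bmap_add]; exact hsum)
    have hS' : ∀ i, ((∃ j, 0 < c i j) ∧ (∃ j, c i j < 0)) → 0 ≤ v i * w i := by
      rintro i ⟨⟨jp, hjp⟩, ⟨jm, hjm⟩⟩
      by_contra hneg
      push_neg at hneg
      rcases mul_neg_iff.mp hneg with ⟨hv, hw⟩ | ⟨hv, hw⟩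
      · have h1 : 0 < Bmap c v jp := by
          rw [Bmap_apply' c hdisj v hjp.ne']; exact mul_pos hv hjp
        have h2 : Bmap c w jp < 0 := by
          rw [Bmap_apply' c hdisj w hjp.ne']; exact mul_neg_of_neg_of_pos hw hjp
        have := (hsc jp).1 h1
        omega
      · have h1 : 0 < Bmap c v jm := by
          rw [Bmap_apply' c hdisj v hjm.ne]; exact mul_pos_of_neg_of_neg hv hjm
        have h2 : Bmap c w jm < 0 := by
          rw [Bmap_apply' c hdisj w hjm.ne]; exact mul_neg_of_pos_of_neg hw hjm
        have := (hsc jm).1 h1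
        omega
    refine ⟨⟨(mem_ker_iff A c v).mpr hvk, (mem_ker_iff A c w).mpr hwk,
      fun h => hv0 (by rw [h, Bmap_zero]), fun h => hw0 (by rw [h, Bmap_zero]),
      hsum', ?_⟩, hS'⟩
    intro i
    obtain ⟨j, hj⟩ := hne i
    have hj' : c i j ≠ 0 := hj
    have hscj := hsc j
    rw [Bmap_apply' c hdisj v hj', Bmap_apply' c hdisj w hj'] at hscj
    rcases hsign i with hnn | hmix
    · have hd : 0 < c i j := lt_of_le_of_ne (hnn j) (Ne.symm hj')
      constructor
      · intro hv
        have h4 := hscj.1 ((sgn_mul_right hd).1.mpr hv)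
        by_contra hw
        push_neg at hw
        have := (sgn_mul_right (a := w i) hd).2.mpr hw
        omega
      · intro hw
        have h4 := hscj.2 ((sgn_mul_right hd).2.mpr hw)
        by_contra hv
        push_neg at hv
        have := (sgn_mul_right (a := v i) hd).1.mpr hv
        omega
    · exact semiconf_pair_of_prod (hS' i hmix)

end Transfer

theorem graver_indispensable_iff_bouquet_condition {m n s : ℕ}
    (A : Matrix (Fin m) (Fin n) ℤ) (c : Fin s → Fin n → ℤ)
    (hc : IsBouquetDecomposition A c)
    (hpos : ¬ ∃ v ∈ kerZ A, v ≠ 0 ∧ ∀ j, 0 ≤ v j)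
    (hsign : ∀ i, (∀ j, 0 ≤ c i j) ∨ ((∃ j, 0 < c i j) ∧ (∃ j, c i j < 0)))
    (S : Set (Fin s))
    (hS : S = {i | (∃ j, 0 < c i j) ∧ (∃ j, c i j < 0)}) :
    (¬ ∃ u v w : Fin s → ℤ, InGraver (bouquetMatrix A c) u ∧
        IsProperSemiconformalDecomp (bouquetMatrix A c) u v w ∧
        ∀ i ∈ S, 0 ≤ v i * w i) ↔
      (¬ ∃ u v w : Fin n → ℤ, InGraver A u ∧
        IsProperSemiconformalDecomp A u v w) := by
  subst hS
  rw [not_iff_not]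
  obtain ⟨hne, hdisj, hcov, hmult⟩ := id hc
  constructor
  · rintro ⟨u, v, w, hG, hSC, hScond⟩
    exact ⟨Bmap c u, Bmap c v, Bmap c w, (graver_transfer A c hc u).mp hG,
      (semiconf_transfer A c hc hsign u v w).mp ⟨hSC, fun i hi => hScond i hi⟩⟩
  · rintro ⟨U, V, W, hG, hSC⟩
    obtain ⟨u, rfl⟩ := exists_Bmap A c hdisj hcov hmult hG.1
    obtain ⟨v, rfl⟩ := exists_Bmap A c hdisj hcov hmult hSC.1
    obtain ⟨w, rfl⟩ := exists_Bmap A c hdisj hcov hmult hSC.2.1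
    have h := (semiconf_transfer A c hc hsign u v w).mpr hSC
    exact ⟨u, v, w, (graver_transfer A c hc u).mpr hG, h.1, fun i hi => h.2 i hi⟩
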